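/- arXiv:1211.4300 — 11 statements merged into one kernel-verified Lean document; each statement's English description precedes it below -/
import Mathlib

section
/- Let η : F → H be an almost G-homomorphism and set N := R ∩ ker η (a normal subgroup of F). Then the image of R in the quotient F/N is contained in the center of F/N, the map induced by η restricts to a group isomorphism from this image onto η(R), and the quotient of F/N by this image is isomorphic to G = F/R. In other words, F/(R ∩ ker η) is a central extension of G by a group isomorphic to η(R). -/
/-!
Modulo `N = R ⊓ ker η` every commutator `⁅r, f⁆` with `r ∈ R` vanishes: it lies in `R` because
`R` is normal and in `ker η` because `η r` commutes with `η f`. So the image of `R` in `F ⧸ N` is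
central. The map `η` descends to `F ⧸ N`, and on the image of `R` its kernel is
`(R ⊓ ker η) / N = 1`, which gives the isomorphism onto `η(R)`. The last claim is the third
isomorphism theorem.
-/

section

open Subgroup QuotientGroup

variable {F H : Type*} [Group F] [Group H]

theorem Subgroup.commutator_top_le_inf_ker {R : Subgroup F} [R.Normal] (η : F →* H)
    (h : ∀ r ∈ R, ∀ f : F, Commute (η r) (η f)) : ⁅R, ⊤⁆ ≤ R ⊓ η.ker :=
  le_inf (commutator_le_left R ⊤) <| commutator_le.2 fun r hr f _ => by
    rw [MonoidHom.mem_ker, map_commutatorElement, commutatorElement_eq_one_iff_commute]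
    exact h r hr f

namespace QuotientGroup

theorem map_mk'_le_center_of_commutator_le {R N : Subgroup F} [N.Normal] (h : ⁅R, ⊤⁆ ≤ N) :
    R.map (mk' N) ≤ center (F ⧸ N) := by
  rw [← commutator_top_right_eq_bot_iff_le_center, ← map_top_of_surjective _ (mk'_surjective N),
    ← map_commutator, eq_bot_iff, ← map_mk'_self N]
  exact map_mono h

section MapMk'

variable {R N : Subgroup F} [N.Normal] {η : F →* H} (hN : N ≤ η.ker) (hRN : R ⊓ η.ker ≤ N)
include hN hRN

theorem injective_domRestrict_lift_map_mk' :
    Function.Injective ((lift N η hN).domRestrict (R.map (mk' N))) := by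
  rw [injective_iff_map_eq_one]
  rintro ⟨_, r, hr, rfl⟩ hr1
  exact Subtype.ext <| (eq_one_iff r).2 <| hRN ⟨hr, hr1⟩

noncomputable def mapMk'EquivMap : R.map (mk' N) ≃* R.map η :=
  (MonoidHom.ofInjective (injective_domRestrict_lift_map_mk' hN hRN)).trans <|
    MulEquiv.subgroupCongr <| by rw [MonoidHom.domRestrict_range, Subgroup.map_map, lift_comp_mk']

theorem mapMk'EquivMap_mk (r : F) (hr : (r : F ⧸ N) ∈ R.map (mk' N)) :
    (mapMk'EquivMap hN hRN ⟨r, hr⟩ : H) = η r :=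
  rfl

end MapMk'

end QuotientGroup

end

open Subgroup QuotientGroup in
/-- Let `F` be a group, `R` a normal subgroup of `F`, `G := F/R`, and let
`η : F →* H` be an almost `G`-homomorphism (i.e. `η(R)` is contained in the center of
`η(F)`).  Set `N := R ⊓ ker η`.  Then the image `Rbar` of `R` in `F ⧸ N` is contained in
the center of `F ⧸ N`, the map induced by `η` restricts to a group isomorphism from
`Rbar` onto `η(R)`, and the quotient of `F ⧸ N` by `Rbar` is isomorphic to `G = F ⧸ R`. -/
theorem almostHom_quotient_is_central_extension
    {F H : Type*} [Group F] [Group H]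
    (R : Subgroup F) [R.Normal] (η : F →* H)
    (halmost : ∀ r ∈ R, ∀ f : F, η r * η f = η f * η r)
    (N : Subgroup F) (hN : N = R ⊓ η.ker) [N.Normal]
    (Rbar : Subgroup (F ⧸ N)) (hRbar : Rbar = R.map (QuotientGroup.mk' N)) [Rbar.Normal] :
    Rbar ≤ Subgroup.center (F ⧸ N) ∧
    (∃ e : Rbar ≃* R.map η,
      ∀ (r : F) (hr : r ∈ R) (hx : (QuotientGroup.mk r : F ⧸ N) ∈ Rbar),
        (e ⟨QuotientGroup.mk r, hx⟩ : H) = η r) ∧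
    ∃ e' : (F ⧸ N) ⧸ Rbar ≃* F ⧸ R,
      ∀ f : F, e' (QuotientGroup.mk (QuotientGroup.mk f)) = QuotientGroup.mk f := by
  subst hN hRbar
  refine ⟨map_mk'_le_center_of_commutator_le (commutator_top_le_inf_ker η halmost),
    ⟨mapMk'EquivMap inf_le_right le_rfl, fun r _ hx => mapMk'EquivMap_mk _ _ r hx⟩,
    quotientQuotientEquivQuotient _ R inf_le_left, fun _ => rfl⟩
end

section
/- The composite homomorphism F → F ∗ Z → (F ∗ Z)/R' (inclusion followed by the quotient map) is surjective and its kernel equals R ∩ ker η; consequently it induces a group isomorphism F/(R ∩ ker η) ≅ (F ∗ Z)/R'. -/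
/-!
Map `F ∗ Z` to `H × F ⧸ R` by `f ↦ (η f, f R)` on `F` and `z ↦ (φ⁻¹ z, 1)` on `Z`. The lifted
relations die because `φ⁻¹ (φ (η r)) = η r` and `r R = 1`, the commuting relations because
`η(R)` commutes with `η(F)`. Hence every `f` with `inl f ∈ R'` satisfies `η f = 1` and `f ∈ R`.
Conversely such an `f` is itself a lifted relation, and `inr (φ (η r)) ≡ inl r` shows that the
image of `F` is everything.
-/

open Monoid

/-- The normal subgroup `R'` of the free product `F ∗ Z`: the normal closure of the set of
"lifted relations" `inl r * (inr (φ (η r)))⁻¹` for `r ∈ R`, together with the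
"commuting relations" `inl f * inr z * (inl f)⁻¹ * (inr z)⁻¹` for `f ∈ F`, `z ∈ Z`. -/
abbrev liftedRelations {F Z H : Type*} [Group F] [Group Z] [Group H]
    (R : Subgroup F) (η : F →* H) (φ : (R.map η) ≃* Z) :
    Subgroup (Coprod F Z) :=
  Subgroup.normalClosure
    ((Set.range fun r : R =>
        Coprod.inl (r : F) *
          (Coprod.inr (φ ⟨η r, Subgroup.mem_map_of_mem η r.2⟩) : Coprod F Z)⁻¹) ∪
      {x | ∃ (f : F) (z : Z),
        x = Coprod.inl f * Coprod.inr z *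
            (Coprod.inl f : Coprod F Z)⁻¹ * (Coprod.inr z : Coprod F Z)⁻¹})

namespace liftedRelations

variable {F Z H : Type*} [Group F] [Group Z] [Group H]
  (R : Subgroup F) (η : F →* H) (φ : (R.map η) ≃* Z)

theorem inl_mul_inr_inv_mem (r : R) :
    Coprod.inl (r : F) * (Coprod.inr (φ ⟨η r, Subgroup.mem_map_of_mem η r.2⟩))⁻¹ ∈
      liftedRelations R η φ :=
  Subgroup.subset_normalClosure (Set.mem_union_left _ ⟨r, rfl⟩)

theorem inl_mem_of_mem_inf {f : F} (hf : f ∈ R ⊓ η.ker) :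
    Coprod.inl f ∈ liftedRelations R η φ := by
  have hφ : φ ⟨η f, Subgroup.mem_map_of_mem η hf.1⟩ = 1 := by
    rw [← map_one φ]
    exact congrArg φ (Subtype.ext hf.2)
  simpa [hφ] using inl_mul_inr_inv_mem R η φ ⟨f, hf.1⟩

theorem mk_inl_eq_mk_inr (r : R) :
    (QuotientGroup.mk (Coprod.inl (r : F)) : Coprod F Z ⧸ liftedRelations R η φ) =
      QuotientGroup.mk (Coprod.inr (φ ⟨η r, Subgroup.mem_map_of_mem η r.2⟩)) :=
  QuotientGroup.eq_iff_div_mem.mpr (by simpa [div_eq_mul_inv] using inl_mul_inr_inv_mem R η φ r)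

theorem range_mk_comp_inr_le :
    ((QuotientGroup.mk' (liftedRelations R η φ)).comp Coprod.inr).range ≤
      ((QuotientGroup.mk' (liftedRelations R η φ)).comp Coprod.inl).range := by
  rintro _ ⟨z, rfl⟩
  obtain ⟨⟨_, r, hr, rfl⟩, rfl⟩ := φ.surjective z
  exact ⟨r, mk_inl_eq_mk_inr R η φ ⟨r, hr⟩⟩

theorem mk_comp_inl_surjective :
    Function.Surjective ((QuotientGroup.mk' (liftedRelations R η φ)).comp Coprod.inl) := by
  rw [← MonoidHom.range_eq_top, ← sup_eq_left.mpr (range_mk_comp_inr_le R η φ),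
    ← Coprod.range_eq, MonoidHom.range_eq_top]
  exact QuotientGroup.mk'_surjective _

def toProdQuotient [R.Normal] : Coprod F Z →* H × F ⧸ R :=
  Coprod.lift (η.prod (QuotientGroup.mk' R)) (((R.map η).subtype.comp φ.symm.toMonoidHom).prod 1)

theorem le_ker_toProdQuotient [R.Normal] (halmost : ∀ r ∈ R, ∀ f : F, η r * η f = η f * η r) :
    liftedRelations R η φ ≤ (toProdQuotient R η φ).ker := by
  refine Subgroup.normalClosure_le_normal ?_
  rintro _ (⟨r, rfl⟩ | ⟨f, z, rfl⟩)
  · simp [toProdQuotient, Prod.ext_iff, (QuotientGroup.eq_one_iff (r : F)).mpr r.2]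
  · obtain ⟨r, hr, hηr⟩ := (φ.symm z).2
    have hcomm : η f * φ.symm z = φ.symm z * η f := by
      rw [← hηr]
      exact (halmost r hr f).symm
    simp [toProdQuotient, Prod.ext_iff, hcomm]

theorem ker_mk_comp_inl [R.Normal] (halmost : ∀ r ∈ R, ∀ f : F, η r * η f = η f * η r) :
    ((QuotientGroup.mk' (liftedRelations R η φ)).comp Coprod.inl).ker = R ⊓ η.ker := by
  refine le_antisymm (fun f hf => ?_) fun f hf => ?_
  · have hdet : toProdQuotient R η φ (Coprod.inl f) = 1 :=
      le_ker_toProdQuotient R η φ halmost ((QuotientGroup.eq_one_iff _).mp hf)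
    simp only [toProdQuotient, Coprod.lift_apply_inl, MonoidHom.prod_apply, Prod.mk_eq_one,
      QuotientGroup.mk'_apply, QuotientGroup.eq_one_iff] at hdet
    exact ⟨hdet.2, hdet.1⟩
  · exact (QuotientGroup.eq_one_iff _).mpr (inl_mem_of_mem_inf R η φ hf)

end liftedRelations

/-- Let `η : F →* H` be an almost `G`-homomorphism (`G = F/R`), `Z` a group,
and `φ : η(R) ≃* Z`.  With `R'` the normal closure described above, the composite
`F →* F ∗ Z →* (F ∗ Z) ⧸ R'` is surjective and its kernel is `R ⊓ ker η`; consequently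
it induces a group isomorphism `F ⧸ (R ⊓ ker η) ≃* (F ∗ Z) ⧸ R'`. -/
theorem coprod_quotient_eq_almostHom_quotient
    {F Z H : Type*} [Group F] [Group Z] [Group H]
    (R : Subgroup F) [R.Normal] (η : F →* H)
    (halmost : ∀ r ∈ R, ∀ f : F, η r * η f = η f * η r)
    (φ : (R.map η) ≃* Z) :
    Function.Surjective
      ((QuotientGroup.mk' (liftedRelations R η φ)).comp Coprod.inl) ∧
    ((QuotientGroup.mk' (liftedRelations R η φ)).comp Coprod.inl).ker = R ⊓ η.ker ∧
    ∃ e : F ⧸ (R ⊓ η.ker) ≃* Coprod F Z ⧸ liftedRelations R η φ,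
      ∀ f : F, e (QuotientGroup.mk f) = QuotientGroup.mk (Coprod.inl f) := by
  have hsurj := liftedRelations.mk_comp_inl_surjective R η φ
  have hker := liftedRelations.ker_mk_comp_inl R η φ halmost
  exact ⟨hsurj, hker, (QuotientGroup.quotientMulEquivOfEq hker.symm).trans
    (QuotientGroup.quotientKerEquivOfSurjective _ hsurj), fun _ => rfl⟩
end

section
/- The composite homomorphism Z → F ∗ Z → (F ∗ Z)/R' (inclusion followed by the quotient map) is injective. -/
/-!
Send `F ∗ Z` to `H` by `η` on `F` and by `φ⁻¹ : Z ≃ η(R) ⊆ H` on `Z`. The lifted relations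
go to `1` by construction, and the commuting relations go to commutators `[η f, η r]`, which
vanish because `η` is an almost `G`-homomorphism. So this map factors through `(F ∗ Z) ⧸ R'`,
and on `Z` it is the injective map `φ⁻¹`.
-/

open Monoid

theorem QuotientGroup.mk'_comp_injective_of_le_ker {G A K : Type*} [Group G] [Group A]
    [Group K] (N : Subgroup G) [N.Normal] (ι : A →* G) (ψ : G →* K) (hN : N ≤ ψ.ker)
    (hψ : Function.Injective (ψ.comp ι)) :
    Function.Injective ((QuotientGroup.mk' N).comp ι) := fun a b hab => by
  simpa using hψ (congrArg (QuotientGroup.lift N ψ hN) hab)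

section

variable {F Z H : Type*} [Group F] [Group Z] [Group H]
  (R : Subgroup F) (η : F →* H) (φ : (R.map η) ≃* Z)

def coprodEval : Coprod F Z →* H :=
  Coprod.lift η ((R.map η).subtype.comp φ.symm.toMonoidHom)

theorem coprodEval_comp_inr_injective :
    Function.Injective ((coprodEval R η φ).comp Coprod.inr) := by
  have hcomp : (coprodEval R η φ).comp Coprod.inr =
      (R.map η).subtype.comp φ.symm.toMonoidHom := Coprod.lift_comp_inr _ _
  rw [hcomp]
  exact Subtype.val_injective.comp φ.symm.injective

theorem liftedRelations_le_ker_coprodEval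
    (halmost : ∀ r ∈ R, ∀ f : F, η r * η f = η f * η r) :
    liftedRelations R η φ ≤ (coprodEval R η φ).ker := by
  refine Subgroup.normalClosure_le_normal ?_
  rintro x (⟨r, rfl⟩ | ⟨f, z, rfl⟩)
  · simp [coprodEval]
  · obtain ⟨r, hr, hrz⟩ := (φ.symm z).2
    simp only [SetLike.mem_coe, MonoidHom.mem_ker, coprodEval, map_mul, map_inv,
      Coprod.lift_apply_inl, Coprod.lift_apply_inr, MonoidHom.comp_apply,
      Subgroup.coe_subtype, MulEquiv.coe_toMonoidHom, ← hrz, ← halmost r hr f]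
    group

end

theorem coprod_quotient_inr_injective_general
    {F Z H : Type*} [Group F] [Group Z] [Group H]
    (R : Subgroup F) (η : F →* H)
    (halmost : ∀ r ∈ R, ∀ f : F, η r * η f = η f * η r)
    (φ : (R.map η) ≃* Z) :
    Function.Injective
      ((QuotientGroup.mk' (liftedRelations R η φ)).comp Coprod.inr) :=
  QuotientGroup.mk'_comp_injective_of_le_ker _ _ (coprodEval R η φ)
    (liftedRelations_le_ker_coprodEval R η φ halmost) (coprodEval_comp_inr_injective R η φ)

/-- In the situation above, the composite homomorphism
`Z →* F ∗ Z →* (F ∗ Z) ⧸ R'` (inclusion followed by the quotient map) is injective. -/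
theorem coprod_quotient_inr_injective
    {F Z H : Type*} [Group F] [Group Z] [Group H]
    (R : Subgroup F) [R.Normal] (η : F →* H)
    (halmost : ∀ r ∈ R, ∀ f : F, η r * η f = η f * η r)
    (φ : (R.map η) ≃* Z) :
    Function.Injective
      ((QuotientGroup.mk' (liftedRelations R η φ)).comp Coprod.inr) :=
  coprod_quotient_inr_injective_general R η halmost φ
end

section
/- The image of Z in (F ∗ Z)/R' under the composite Z → F ∗ Z → (F ∗ Z)/R' is contained in the center of (F ∗ Z)/R', and the quotient of (F ∗ Z)/R' by this image is isomorphic to G = F/R; thus (F ∗ Z)/R' is a central extension of G. -/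
open Monoid

/-!
The relations of `R'` make every `inr z` commute with every `inl f`, and `Z ≅ η(R)` is abelian
because `η(R)` is central in `η(F)`; as `F ∗ Z` is generated by the images of `F` and `Z`, the
image of `Z` is central. Killing it kills `inr`, and with it `inl r ≡ inr (φ (η r))` for `r ∈ R`,
so what remains is `F` modulo `R`: the map `inl f ↦ f R`, `inr z ↦ 1` descends and is inverted by
`f R ↦ inl f`.
-/

namespace Monoid.Coprod

theorem mem_center_of_commute_inl_inr {M N G : Type*} [Monoid M] [Monoid N] [Monoid G]
    (ψ : M ∗ N →* G) (hψ : Function.Surjective ψ) {g : G}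
    (hinl : ∀ m, Commute g (ψ (inl m))) (hinr : ∀ n, Commute g (ψ (inr n))) :
    g ∈ Submonoid.center G := by
  have hcomm : ∀ w, Commute g (ψ w) := fun w => by
    induction w using Coprod.induction_on with
    | inl m => exact hinl m
    | inr n => exact hinr n
    | mul a b ha hb => simpa only [map_mul] using ha.mul_right hb
  refine Submonoid.mem_center_iff.mpr fun h => ?_
  obtain ⟨w, rfl⟩ := hψ h
  exact (hcomm w).symm.eq

end Monoid.Coprod

theorem commute_of_mulEquiv_subgroup {G Z : Type*} [Group G] [Group Z] {S : Subgroup G}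
    (hS : ∀ a ∈ S, ∀ b ∈ S, Commute a b) (φ : S ≃* Z) (z z' : Z) : Commute z z' := by
  obtain ⟨⟨a, ha⟩, rfl⟩ := φ.surjective z
  obtain ⟨⟨b, hb⟩, rfl⟩ := φ.surjective z'
  have hab : Commute (⟨a, ha⟩ : S) ⟨b, hb⟩ := Subtype.ext (hS a ha b hb)
  exact hab.map φ

section liftedRelations

variable {F Z H : Type*} [Group F] [Group Z] [Group H]
  (R : Subgroup F) (η : F →* H) (φ : (R.map η) ≃* Z)

open QuotientGroup

theorem mk_inl_eq_mk_inr_of_mem (r : R) :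
    (mk (Coprod.inl (r : F)) : Coprod F Z ⧸ liftedRelations R η φ) =
      mk (Coprod.inr (φ ⟨η r, Subgroup.mem_map_of_mem η r.2⟩)) := by
  rw [eq_iff_div_mem, div_eq_mul_inv]
  exact Subgroup.subset_normalClosure (Or.inl ⟨r, rfl⟩)

theorem commute_mk_inl_mk_inr (f : F) (z : Z) :
    Commute (mk (Coprod.inl f) : Coprod F Z ⧸ liftedRelations R η φ) (mk (Coprod.inr z)) := by
  have hrel : Coprod.inl f * Coprod.inr z * (Coprod.inl f : Coprod F Z)⁻¹ *
      (Coprod.inr z : Coprod F Z)⁻¹ ∈ liftedRelations R η φ :=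
    Subgroup.subset_normalClosure (Or.inr ⟨f, z, rfl⟩)
  rwa [← QuotientGroup.eq_one_iff, mk_mul, mk_mul, mk_mul, mk_inv, mk_inv, ← commutatorElement_def,
    commutatorElement_eq_one_iff_commute] at hrel

theorem range_mk_inr_le_center (hZ : ∀ z z' : Z, Commute z z') :
    ((mk' (liftedRelations R η φ)).comp Coprod.inr).range ≤
      Subgroup.center (Coprod F Z ⧸ liftedRelations R η φ) := by
  rintro _ ⟨z, rfl⟩
  exact Coprod.mem_center_of_commute_inl_inr (mk' (liftedRelations R η φ)) (mk'_surjective _)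
    (fun f => (commute_mk_inl_mk_inr R η φ f z).symm)
    (fun z' => (hZ z z').map ((mk' (liftedRelations R η φ)).comp Coprod.inr))

theorem liftedRelations_le_ker_lift [R.Normal] :
    liftedRelations R η φ ≤ (Coprod.lift (mk' R) (1 : Z →* F ⧸ R)).ker := by
  refine Subgroup.normalClosure_le_normal ?_
  rintro _ (⟨r, rfl⟩ | ⟨f, z, rfl⟩)
  · simp [(QuotientGroup.eq_one_iff _).mpr r.2]
  · simp

theorem mk_mk_inr_eq_one [((mk' (liftedRelations R η φ)).comp Coprod.inr).range.Normal] (z : Z) :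
    (mk (mk (Coprod.inr z)) : (Coprod F Z ⧸ liftedRelations R η φ) ⧸
      ((mk' (liftedRelations R η φ)).comp Coprod.inr).range) = 1 :=
  (QuotientGroup.eq_one_iff _).mpr ⟨z, rfl⟩

variable [R.Normal] [((mk' (liftedRelations R η φ)).comp Coprod.inr).range.Normal]

def quotientRangeInrToQuotient :
    (Coprod F Z ⧸ liftedRelations R η φ) ⧸ ((mk' (liftedRelations R η φ)).comp Coprod.inr).range
      →* F ⧸ R :=
  lift _ (lift _ _ (liftedRelations_le_ker_lift R η φ)) <| by
    rintro _ ⟨z, rfl⟩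
    simp

def quotientToQuotientRangeInr :
    F ⧸ R →*
      (Coprod F Z ⧸ liftedRelations R η φ) ⧸ ((mk' (liftedRelations R η φ)).comp Coprod.inr).range :=
  lift R ((mk' _).comp ((mk' _).comp Coprod.inl)) fun r hr => by
    show mk (mk (Coprod.inl r)) = 1
    rw [mk_inl_eq_mk_inr_of_mem R η φ ⟨r, hr⟩, mk_mk_inr_eq_one]

def quotientRangeInrEquiv :
    (Coprod F Z ⧸ liftedRelations R η φ) ⧸ ((mk' (liftedRelations R η φ)).comp Coprod.inr).range
      ≃* F ⧸ R :=
  MonoidHom.toMulEquiv (quotientRangeInrToQuotient R η φ) (quotientToQuotientRangeInr R η φ)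
    (by
      refine monoidHom_ext _ (monoidHom_ext _ (Coprod.hom_ext ?_ ?_))
      · ext f; rfl
      · ext z
        show quotientToQuotientRangeInr R η φ 1 = mk (mk (Coprod.inr z))
        rw [map_one, mk_mk_inr_eq_one])
    (monoidHom_ext _ (by ext f; rfl))

theorem quotientRangeInrEquiv_mk_mk_inl (f : F) :
    quotientRangeInrEquiv R η φ (mk (mk (Coprod.inl f))) = (f : F ⧸ R) :=
  rfl

end liftedRelations

/-- In the situation above, the image of `Z` in `(F ∗ Z) ⧸ R'` under the
composite `Z →* F ∗ Z →* (F ∗ Z) ⧸ R'` is contained in the center of `(F ∗ Z) ⧸ R'`, and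
the quotient of `(F ∗ Z) ⧸ R'` by this image is isomorphic to `G = F ⧸ R`; thus
`(F ∗ Z) ⧸ R'` is a central extension of `G`. -/
theorem coprod_quotient_is_central_extension
    {F Z H : Type*} [Group F] [Group Z] [Group H]
    (R : Subgroup F) [R.Normal] (η : F →* H)
    (halmost : ∀ r ∈ R, ∀ f : F, η r * η f = η f * η r)
    (φ : (R.map η) ≃* Z)
    [(((QuotientGroup.mk' (liftedRelations R η φ)).comp Coprod.inr).range).Normal] :
    ((QuotientGroup.mk' (liftedRelations R η φ)).comp Coprod.inr).range
        ≤ Subgroup.center (Coprod F Z ⧸ liftedRelations R η φ) ∧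
    ∃ e : (Coprod F Z ⧸ liftedRelations R η φ) ⧸
            ((QuotientGroup.mk' (liftedRelations R η φ)).comp Coprod.inr).range ≃* F ⧸ R,
      ∀ f : F,
        e (QuotientGroup.mk (QuotientGroup.mk (Coprod.inl f))) = QuotientGroup.mk f := by
  have hZ : ∀ z z' : Z, Commute z z' := by
    refine commute_of_mulEquiv_subgroup ?_ φ
    rintro _ ⟨r, hr, rfl⟩ _ ⟨s, -, rfl⟩
    exact halmost r hr s
  exact ⟨range_mk_inr_le_center R η φ hZ, quotientRangeInrEquiv R η φ,
    quotientRangeInrEquiv_mk_mk_inl R η φ⟩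
end

section
/- If γ_α(−1) = −1, γ_α(1) = 1, and γ_α⁴ is the identity permutation of I, then α̂⁴ = ζ⁻² in H. -/
/-!
Write `x = A(-1)·T(-1,1)⁻¹·A(1)` and `r = ζ·P(swap(-1,1))`, so that `α̂ = x·P(γ_α)`. Since `γ_α`
fixes `±1`, `P(γ_α)` commutes with `x`, and `P(γ_α)⁴ = P(γ_α⁴) = 1`; hence `α̂⁴ = x⁴`.
Conjugation by `r` exchanges `A(-1)` and `A(1)` and sends `T(1,-1)` to `T(-1,1)`, and (K4) reads
`T(-1,1)·A(-1)·T(1,-1) = A(-1)·A(1)·r`. Writing `a, b, t, u` for `A(-1), A(1), T(-1,1), T(1,-1)`,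
this gives `x²·r = x·r·(r⁻¹·x·r) = a·t⁻¹·(b·r·b)·u⁻¹·a` with `b·r·b = a·b·r = t·a·u`, so
`x²·r = a³ = 1`. Hence `x⁴ = r⁻² = ζ⁻²·P(swap(-1,1)²) = ζ⁻²`.
-/

/-- The index set `I` of nonzero rational numbers. -/
abbrev Qx : Type := {q : ℚ // q ≠ 0}

/-- `-1` as an element of `Qx`. -/
def qNegOne : Qx := ⟨-1, by norm_num⟩

/-- `1` as an element of `Qx`. -/
def qOne : Qx := ⟨1, one_ne_zero⟩

/-- `-1/2` as an element of `Qx`. -/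
def qNegHalf : Qx := ⟨-1/2, by norm_num⟩

theorem mul_inv_mul_sq_eq_inv {G : Type*} [Group G] {a b t u r : G} (hab : Commute a b)
    (ha : a ^ 3 = 1) (hra : SemiconjBy r a b) (hrb : SemiconjBy r b a) (hru : SemiconjBy r u t)
    (h : t * a * u = a * b * r) :
    (a * t⁻¹ * b) ^ 2 = r⁻¹ := by
  have hconj : SemiconjBy r (b * u⁻¹ * a) (a * t⁻¹ * b) :=
    (hrb.mul_right hru.inv_right).mul_right hra
  have hbrb : b * r * b = t * a * u := by
    rw [h, mul_assoc, hrb.eq, ← mul_assoc, hab.eq]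
  rw [← mul_eq_one_iff_eq_inv]
  calc (a * t⁻¹ * b) ^ 2 * r = (a * t⁻¹ * b) * (r * (b * u⁻¹ * a)) := by
        rw [hconj.eq, sq, mul_assoc]
    _ = a * t⁻¹ * (b * r * b) * u⁻¹ * a := by group
    _ = a ^ 3 := by rw [hbrb, pow_three]; group
    _ = 1 := ha

theorem pow_eq_one_of_map_mul {M G : Type*} [Monoid M] [Group G] {P : M → G}
    (hP : ∀ σ τ, P σ * P τ = P (σ * τ)) {σ : M} {n : ℕ} (hσ : σ ^ n = 1) : P σ ^ n = 1 := by
  let φ : M →* G := MonoidHom.mk' P fun σ τ => (hP σ τ).symm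
  calc P σ ^ n = φ (σ ^ n) := (map_pow φ σ n).symm
    _ = 1 := by rw [hσ, map_one]

section LiftedKashaev

variable {ι H : Type*} [Group H] {ζ : H} {A : ι → H} {T : ι → ι → H}
  {P : Equiv.Perm ι → H}

theorem sq_A_mul_T_inv_mul_A [DecidableEq ι] (hζ : ζ ∈ Subgroup.center H)
    (K1 : ∀ j, A j ^ 3 = 1)
    (K4 : ∀ j k, j ≠ k → T j k * A j * T k j = ζ * A j * A k * P (Equiv.swap j k))
    (K6a : ∀ (σ : Equiv.Perm ι) (j), P σ * A j = A (σ j) * P σ)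
    (K6b : ∀ (σ : Equiv.Perm ι) (j k), j ≠ k → P σ * T j k = T (σ j) (σ k) * P σ)
    (K7c : ∀ j k, j ≠ k → A j * A k = A k * A j) {j k : ι} (hjk : j ≠ k) :
    (A j * (T j k)⁻¹ * A k) ^ 2 = (ζ * P (Equiv.swap j k))⁻¹ := by
  have hζ' : ∀ g, Commute ζ g := fun g => (Subgroup.mem_center_iff.mp hζ g).symm
  have hsj : SemiconjBy (P (Equiv.swap j k)) (A j) (A k) := by
    rw [SemiconjBy, K6a, Equiv.swap_apply_left]
  have hsk : SemiconjBy (P (Equiv.swap j k)) (A k) (A j) := by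
    rw [SemiconjBy, K6a, Equiv.swap_apply_right]
  have hsT : SemiconjBy (P (Equiv.swap j k)) (T k j) (T j k) := by
    rw [SemiconjBy, K6b _ _ _ hjk.symm, Equiv.swap_apply_left, Equiv.swap_apply_right]
  refine mul_inv_mul_sq_eq_inv (u := T k j) (K7c j k hjk) (K1 j)
    (SemiconjBy.mul_left (hζ' _) hsj) (SemiconjBy.mul_left (hζ' _) hsk)
    (SemiconjBy.mul_left (hζ' _) hsT) ?_
  rw [K4 j k hjk, mul_assoc ζ, (hζ' _).eq, mul_assoc]

theorem A_mul_T_inv_mul_A_pow_four [DecidableEq ι] (hζ : ζ ∈ Subgroup.center H)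
    (K1 : ∀ j, A j ^ 3 = 1)
    (K4 : ∀ j k, j ≠ k → T j k * A j * T k j = ζ * A j * A k * P (Equiv.swap j k))
    (K5 : ∀ σ τ, P σ * P τ = P (σ * τ))
    (K6a : ∀ (σ : Equiv.Perm ι) (j), P σ * A j = A (σ j) * P σ)
    (K6b : ∀ (σ : Equiv.Perm ι) (j k), j ≠ k → P σ * T j k = T (σ j) (σ k) * P σ)
    (K7c : ∀ j k, j ≠ k → A j * A k = A k * A j) {j k : ι} (hjk : j ≠ k) :
    (A j * (T j k)⁻¹ * A k) ^ 4 = ζ ^ (-2 : ℤ) := by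
  have hs : P (Equiv.swap j k) ^ 2 = 1 :=
    pow_eq_one_of_map_mul K5 (by rw [sq, Equiv.swap_mul_self])
  have hcomm : Commute ζ (P (Equiv.swap j k)) :=
    (Subgroup.mem_center_iff.mp hζ _).symm
  rw [show 4 = 2 * 2 from rfl, pow_mul, sq_A_mul_T_inv_mul_A hζ K1 K4 K6a K6b K7c hjk, inv_pow,
    hcomm.mul_pow, hs, mul_one, zpow_neg, zpow_ofNat]

theorem commute_A_mul_T_inv_mul_A_of_fixed
    (K6a : ∀ (σ : Equiv.Perm ι) (j), P σ * A j = A (σ j) * P σ)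
    (K6b : ∀ (σ : Equiv.Perm ι) (j k), j ≠ k → P σ * T j k = T (σ j) (σ k) * P σ)
    {σ : Equiv.Perm ι} {j k : ι} (hjk : j ≠ k) (hj : σ j = j) (hk : σ k = k) :
    Commute (A j * (T j k)⁻¹ * A k) (P σ) := by
  have hA : ∀ i, σ i = i → Commute (P σ) (A i) := fun i hi => by
    rw [Commute, SemiconjBy, K6a, hi]
  have hT : Commute (P σ) (T j k) := by
    rw [Commute, SemiconjBy, K6b _ _ _ hjk, hj, hk]
  exact (((hA j hj).mul_right hT.inv_right).mul_right (hA k hk)).symm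

end LiftedKashaev

theorem qNegOne_ne_qOne : qNegOne ≠ qOne := by
  norm_num [qNegOne, qOne]

theorem alphaHat_fourth_eq_zeta_negTwo_general
    {H : Type*} [Group H] (ζ : H) (hζ : ζ ∈ Subgroup.center H)
    (A : Qx → H) (T : Qx → Qx → H) (P : Equiv.Perm Qx → H)
    (K1 : ∀ j, A j ^ 3 = 1)
    (K4 : ∀ j k, j ≠ k → T j k * A j * T k j = ζ * A j * A k * P (Equiv.swap j k))
    (K5 : ∀ σ τ, P σ * P τ = P (σ * τ))
    (K6a : ∀ (σ : Equiv.Perm Qx) (j), P σ * A j = A (σ j) * P σ)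
    (K6b : ∀ (σ : Equiv.Perm Qx) (j k), j ≠ k → P σ * T j k = T (σ j) (σ k) * P σ)
    (K7c : ∀ j k, j ≠ k → A j * A k = A k * A j)
    (γα : Equiv.Perm Qx)
    (hα1 : γα qNegOne = qNegOne) (hα2 : γα qOne = qOne) (hα4 : γα ^ 4 = 1) :
    (A qNegOne * (T qNegOne qOne)⁻¹ * A qOne * P γα) ^ 4 = ζ ^ (-2 : ℤ) := by
  rw [(commute_A_mul_T_inv_mul_A_of_fixed K6a K6b qNegOne_ne_qOne hα1 hα2).mul_pow,
    A_mul_T_inv_mul_A_pow_four hζ K1 K4 K5 K6a K6b K7c qNegOne_ne_qOne,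
    pow_eq_one_of_map_mul K5 hα4, mul_one]

/-- if `γ_α` fixes `-1` and `1` and `γ_α⁴ = 1`, then `α̂⁴ = ζ⁻²`, where
`α̂ = A(-1)·T(-1,1)⁻¹·A(1)·P(γ_α)`. -/
theorem alphaHat_fourth_eq_zeta_negTwo
    {H : Type*} [Group H] (ζ : H) (hζ : ζ ∈ Subgroup.center H)
    (A : Qx → H) (T : Qx → Qx → H) (P : Equiv.Perm Qx → H)
    (K1 : ∀ j, A j ^ 3 = 1)
    (K2 : ∀ j k ℓ, j ≠ k → j ≠ ℓ → k ≠ ℓ → T k ℓ * T j k = T j k * T j ℓ * T k ℓ)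
    (K3 : ∀ j k, j ≠ k → A j * T j k * A k = A k * T k j * A j)
    (K4 : ∀ j k, j ≠ k → T j k * A j * T k j = ζ * A j * A k * P (Equiv.swap j k))
    (K5 : ∀ σ τ, P σ * P τ = P (σ * τ))
    (K6a : ∀ (σ : Equiv.Perm Qx) (j), P σ * A j = A (σ j) * P σ)
    (K6b : ∀ (σ : Equiv.Perm Qx) (j k), j ≠ k → P σ * T j k = T (σ j) (σ k) * P σ)
    (K7a : ∀ j k l m, j ≠ k → j ≠ l → j ≠ m → k ≠ l → k ≠ m → l ≠ m →
      T j k * T l m = T l m * T j k)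
    (K7b : ∀ j k l, j ≠ k → j ≠ l → k ≠ l → T j k * A l = A l * T j k)
    (K7c : ∀ j k, j ≠ k → A j * A k = A k * A j)
    (γα : Equiv.Perm Qx)
    (hα1 : γα qNegOne = qNegOne) (hα2 : γα qOne = qOne) (hα4 : γα ^ 4 = 1) :
    (A qNegOne * (T qNegOne qOne)⁻¹ * A qOne * P γα) ^ 4 = ζ ^ (-2 : ℤ) :=
  alphaHat_fourth_eq_zeta_negTwo_general ζ hζ A T P K1 K4 K5 K6a K6b K7c γα hα1 hα2 hα4
end

section
/- If γ_α(−1) = −1 and γ_α(1) = 1, then α̂² = ζ⁻¹ · P(swap(−1,1)) · P(γ_α)² in H. -/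
/-!
Write `a = A(-1)`, `b = A(1)`, `t = T(-1,1)`, `s = T(1,-1)`, `w = P(swap(-1,1))` and `p = P(γ_α)`.
Since `γ_α` fixes `±1`, `p` commutes with `a`, `b`, `t`, so `α̂² = (a t⁻¹ b)² p²`. Eliminating `s`
between (K3) and (K4), and using `a³ = 1`, `ab = ba` and that `w` is an involution swapping `a`
and `b`, gives `t b⁻¹ a⁻¹ t = ζ b² w`; inverting this yields `(a t⁻¹ b)² = ζ⁻¹ w`.
-/

section KashaevCore

variable {G : Type*} [Group G] {ζ a b t s w : G}

lemma mul_inv_mul_inv_mul_eq_of_kashaev (hab : Commute a b) (ha : a ^ 3 = 1)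
    (h3 : a * t * b = b * s * a) (h4 : t * a * s = ζ * a * b * w)
    (hwa : w * a = b * w) (hwb : w * b = a * w) :
    t * b⁻¹ * a⁻¹ * t = ζ * b * b * w := by
  have ha2 : a * a = a⁻¹ := (inv_eq_of_mul_eq_one_right (by rw [← pow_three, ha])).symm
  have hmid : a * b⁻¹ * a = b⁻¹ * a⁻¹ := by rw [hab.inv_right.eq, mul_assoc, ha2]
  have hs : s = b⁻¹ * a * t * b * a⁻¹ := by
    calc s = b⁻¹ * (b * s * a) * a⁻¹ := by group
      _ = b⁻¹ * a * t * b * a⁻¹ := by rw [← h3]; group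
  calc t * b⁻¹ * a⁻¹ * t = t * (a * b⁻¹ * a) * t := by rw [hmid]; group
    _ = t * a * s * (a * b⁻¹) := by rw [hs]; group
    _ = ζ * a * b * (w * a) * b⁻¹ := by rw [h4]; group
    _ = ζ * a * b * b * (w * b⁻¹) := by rw [hwa]; group
    _ = ζ * (a * (b * b)) * a⁻¹ * w := by rw [SemiconjBy.inv_right hwb]; group
    _ = ζ * b * b * w := by rw [(hab.mul_right hab).eq]; group

lemma sq_mul_inv_mul_eq_of_kashaev (hζ : ζ ∈ Subgroup.center G) (hab : Commute a b)
    (ha : a ^ 3 = 1) (h3 : a * t * b = b * s * a) (h4 : t * a * s = ζ * a * b * w)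
    (hwa : w * a = b * w) (hwb : w * b = a * w) (hw : w * w = 1) :
    (a * t⁻¹ * b) ^ 2 = ζ⁻¹ * w := by
  have hζ' : ∀ x : G, x * ζ⁻¹ = ζ⁻¹ * x := Subgroup.mem_center_iff.mp (inv_mem hζ)
  have hw' : w⁻¹ = w := inv_eq_of_mul_eq_one_right hw
  calc (a * t⁻¹ * b) ^ 2 = a * t⁻¹ * (b * a) * t⁻¹ * b := by rw [sq]; group
    _ = a * (t * b⁻¹ * a⁻¹ * t)⁻¹ * b := by rw [← hab.eq]; group
    _ = a * w⁻¹ * b⁻¹ * b⁻¹ * (ζ⁻¹ * b) := by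
      rw [mul_inv_mul_inv_mul_eq_of_kashaev hab ha h3 h4 hwa hwb]; group
    _ = a * w * b⁻¹ * ζ⁻¹ := by rw [← hζ', hw']; group
    _ = ζ⁻¹ * (a * (w * b⁻¹)) := by rw [hζ']; group
    _ = ζ⁻¹ * w := by rw [SemiconjBy.inv_right hwb]; group

end KashaevCore

theorem alphaHat_squared_general
    {H : Type*} [Group H] (ζ : H) (hζ : ζ ∈ Subgroup.center H)
    (A : Qx → H) (T : Qx → Qx → H) (P : Equiv.Perm Qx → H)
    (K1 : ∀ j, A j ^ 3 = 1)
    (K3 : ∀ j k, j ≠ k → A j * T j k * A k = A k * T k j * A j)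
    (K4 : ∀ j k, j ≠ k → T j k * A j * T k j = ζ * A j * A k * P (Equiv.swap j k))
    (K5 : ∀ σ τ, P σ * P τ = P (σ * τ))
    (K6a : ∀ (σ : Equiv.Perm Qx) (j), P σ * A j = A (σ j) * P σ)
    (K6b : ∀ (σ : Equiv.Perm Qx) (j k), j ≠ k → P σ * T j k = T (σ j) (σ k) * P σ)
    (K7c : ∀ j k, j ≠ k → A j * A k = A k * A j)
    (γα : Equiv.Perm Qx)
    (hα1 : γα qNegOne = qNegOne) (hα2 : γα qOne = qOne) :
    (A qNegOne * (T qNegOne qOne)⁻¹ * A qOne * P γα) ^ 2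
      = ζ⁻¹ * P (Equiv.swap qNegOne qOne) * (P γα) ^ 2 := by
  have hne : qNegOne ≠ qOne := by norm_num [qNegOne, qOne]
  have hP1 : P 1 = 1 := (MonoidHom.mk' P fun σ τ => (K5 σ τ).symm).map_one
  have hw : P (Equiv.swap qNegOne qOne) * P (Equiv.swap qNegOne qOne) = 1 := by
    rw [K5, Equiv.swap_mul_self, hP1]
  have hwa := K6a (Equiv.swap qNegOne qOne) qNegOne
  have hwb := K6a (Equiv.swap qNegOne qOne) qOne
  rw [Equiv.swap_apply_left] at hwa
  rw [Equiv.swap_apply_right] at hwb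
  have hpa : Commute (P γα) (A qNegOne) := by rw [Commute, SemiconjBy, K6a, hα1]
  have hpb : Commute (P γα) (A qOne) := by rw [Commute, SemiconjBy, K6a, hα2]
  have hpt : Commute (P γα) (T qNegOne qOne) := by
    rw [Commute, SemiconjBy, K6b _ _ _ hne, hα1, hα2]
  rw [((hpa.mul_right hpt.inv_right).mul_right hpb).symm.mul_pow,
    sq_mul_inv_mul_eq_of_kashaev hζ (K7c _ _ hne) (K1 _) (K3 _ _ hne) (K4 _ _ hne) hwa hwb hw]

/-- if `γ_α` fixes `-1` and `1`, then
`α̂² = ζ⁻¹ · P(swap(-1,1)) · P(γ_α)²`, where `α̂ = A(-1)·T(-1,1)⁻¹·A(1)·P(γ_α)`. -/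
theorem alphaHat_squared
    {H : Type*} [Group H] (ζ : H) (hζ : ζ ∈ Subgroup.center H)
    (A : Qx → H) (T : Qx → Qx → H) (P : Equiv.Perm Qx → H)
    (K1 : ∀ j, A j ^ 3 = 1)
    (K2 : ∀ j k ℓ, j ≠ k → j ≠ ℓ → k ≠ ℓ → T k ℓ * T j k = T j k * T j ℓ * T k ℓ)
    (K3 : ∀ j k, j ≠ k → A j * T j k * A k = A k * T k j * A j)
    (K4 : ∀ j k, j ≠ k → T j k * A j * T k j = ζ * A j * A k * P (Equiv.swap j k))
    (K5 : ∀ σ τ, P σ * P τ = P (σ * τ))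
    (K6a : ∀ (σ : Equiv.Perm Qx) (j), P σ * A j = A (σ j) * P σ)
    (K6b : ∀ (σ : Equiv.Perm Qx) (j k), j ≠ k → P σ * T j k = T (σ j) (σ k) * P σ)
    (K7a : ∀ j k l m, j ≠ k → j ≠ l → j ≠ m → k ≠ l → k ≠ m → l ≠ m →
      T j k * T l m = T l m * T j k)
    (K7b : ∀ j k l, j ≠ k → j ≠ l → k ≠ l → T j k * A l = A l * T j k)
    (K7c : ∀ j k, j ≠ k → A j * A k = A k * A j)
    (γα : Equiv.Perm Qx)
    (hα1 : γα qNegOne = qNegOne) (hα2 : γα qOne = qOne) :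
    (A qNegOne * (T qNegOne qOne)⁻¹ * A qOne * P γα) ^ 2
      = ζ⁻¹ * P (Equiv.swap qNegOne qOne) * (P γα) ^ 2 :=
  alphaHat_squared_general ζ hζ A T P K1 K3 K4 K5 K6a K6b K7c γα hα1 hα2
end

section
/- If γ_β(−1) = −1 and γ_β(1) = −1/2, then β̂ · α̂ = A(−1)² · T(−1, −1/2)⁻¹ · A(−1/2) · P(γ_β · γ_α) in H, where γ_β · γ_α is the composite permutation x ↦ γ_β(γ_α(x)). -/
section PermAction

variable {ι H : Type*} [Group H] {A : ι → H} {T : ι → ι → H} {P : Equiv.Perm ι → H}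

theorem semiconjBy_perm_mul_inv_mul
    (hPA : ∀ (σ : Equiv.Perm ι) (j), P σ * A j = A (σ j) * P σ)
    (hPT : ∀ (σ : Equiv.Perm ι) (j k), j ≠ k → P σ * T j k = T (σ j) (σ k) * P σ)
    (σ : Equiv.Perm ι) {j k : ι} (hjk : j ≠ k) :
    SemiconjBy (P σ) (A j * (T j k)⁻¹ * A k) (A (σ j) * (T (σ j) (σ k))⁻¹ * A (σ k)) :=
  have hA : ∀ i, SemiconjBy (P σ) (A i) (A (σ i)) := hPA σ
  have hT : SemiconjBy (P σ) (T j k) (T (σ j) (σ k)) := hPT σ j k hjk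
  ((hA j).mul_right hT.inv_right).mul_right (hA k)

end PermAction

theorem betaHat_mul_alphaHat_general
    {H : Type*} [Group H]
    (A : Qx → H) (T : Qx → Qx → H) (P : Equiv.Perm Qx → H)
    (K5 : ∀ σ τ, P σ * P τ = P (σ * τ))
    (K6a : ∀ (σ : Equiv.Perm Qx) (j), P σ * A j = A (σ j) * P σ)
    (K6b : ∀ (σ : Equiv.Perm Qx) (j k), j ≠ k → P σ * T j k = T (σ j) (σ k) * P σ)
    (γα γβ : Equiv.Perm Qx)
    (hβ1 : γβ qNegOne = qNegOne) (hβ2 : γβ qOne = qNegHalf) :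
    (A qNegOne * P γβ) * (A qNegOne * (T qNegOne qOne)⁻¹ * A qOne * P γα)
      = (A qNegOne) ^ 2 * (T qNegOne qNegHalf)⁻¹ * A qNegHalf * P (γβ * γα) := by
  have hmove := semiconjBy_perm_mul_inv_mul K6a K6b γβ qNegOne_ne_qOne
  rw [hβ1, hβ2] at hmove
  calc (A qNegOne * P γβ) * (A qNegOne * (T qNegOne qOne)⁻¹ * A qOne * P γα)
      = A qNegOne * (P γβ * (A qNegOne * (T qNegOne qOne)⁻¹ * A qOne)) * P γα := by
        simp only [mul_assoc]
    _ = A qNegOne * (A qNegOne * (T qNegOne qNegHalf)⁻¹ * A qNegHalf) * (P γβ * P γα) := by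
        rw [hmove.eq]; simp only [mul_assoc]
    _ = (A qNegOne) ^ 2 * (T qNegOne qNegHalf)⁻¹ * A qNegHalf * P (γβ * γα) := by
        rw [K5, sq]; simp only [mul_assoc]

/-- if `γ_β(-1) = -1` and `γ_β(1) = -1/2`, then
`β̂·α̂ = A(-1)²·T(-1,-1/2)⁻¹·A(-1/2)·P(γ_β·γ_α)`. -/
theorem betaHat_mul_alphaHat
    {H : Type*} [Group H] (ζ : H) (hζ : ζ ∈ Subgroup.center H)
    (A : Qx → H) (T : Qx → Qx → H) (P : Equiv.Perm Qx → H)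
    (K1 : ∀ j, A j ^ 3 = 1)
    (K2 : ∀ j k ℓ, j ≠ k → j ≠ ℓ → k ≠ ℓ → T k ℓ * T j k = T j k * T j ℓ * T k ℓ)
    (K3 : ∀ j k, j ≠ k → A j * T j k * A k = A k * T k j * A j)
    (K4 : ∀ j k, j ≠ k → T j k * A j * T k j = ζ * A j * A k * P (Equiv.swap j k))
    (K5 : ∀ σ τ, P σ * P τ = P (σ * τ))
    (K6a : ∀ (σ : Equiv.Perm Qx) (j), P σ * A j = A (σ j) * P σ)
    (K6b : ∀ (σ : Equiv.Perm Qx) (j k), j ≠ k → P σ * T j k = T (σ j) (σ k) * P σ)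
    (K7a : ∀ j k l m, j ≠ k → j ≠ l → j ≠ m → k ≠ l → k ≠ m → l ≠ m →
      T j k * T l m = T l m * T j k)
    (K7b : ∀ j k l, j ≠ k → j ≠ l → k ≠ l → T j k * A l = A l * T j k)
    (K7c : ∀ j k, j ≠ k → A j * A k = A k * A j)
    (γα γβ : Equiv.Perm Qx)
    (hβ1 : γβ qNegOne = qNegOne) (hβ2 : γβ qOne = qNegHalf) :
    (A qNegOne * P γβ) * (A qNegOne * (T qNegOne qOne)⁻¹ * A qOne * P γα)
      = (A qNegOne) ^ 2 * (T qNegOne qNegHalf)⁻¹ * A qNegHalf * P (γβ * γα) :=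
  betaHat_mul_alphaHat_general A T P K5 K6a K6b γα γβ hβ1 hβ2
end

section
/- For any mutually distinct a, b, c ∈ I, one has (A(a)² · T(a,b)⁻¹ · A(b) · P(swap(b,c)))⁵ = ζ⁻³ in H. -/
/-!
Let `s = (a b)(b c)`, the 3-cycle `a ↦ b ↦ c ↦ a`, and `B = T(b,a) A(b)⁻¹ P(s)`. Solving (K4) for
`T(a,b)⁻¹` shows that the element raised to the fifth power is `ζ⁻¹ B`, so it suffices to show
`B⁵ = ζ²`. As `P(s)³ = 1`, `B³` is the product `T(b,a)A(b)⁻¹ · T(c,b)A(c)⁻¹ · T(a,c)A(a)⁻¹` of the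
three `P(s)`-conjugates of `T(b,a)A(b)⁻¹`; (K3), (K7) and the pentagon (K2) turn it into
`A(c)⁻¹ T(a,c) T(b,a) A(b)⁻¹ A(a)⁻¹`. Writing `B⁵ = B² B³` and conjugating by `P(s)⁻¹`, the word
contains `T(b,c) A(b)⁻² T(c,b) = T(b,c) A(b) T(c,b)` and then `T(b,a) A(b) T(a,b)`, and the two
instances of (K4) reduce it to `ζ²`.
-/

section ThreeCycle

open Equiv

variable {ι : Type*} [DecidableEq ι] {a b c : ι}

theorem Equiv.swap_mul_swap_pow_three (hab : a ≠ b) (hac : a ≠ c) (hbc : b ≠ c) :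
    (swap a b * swap b c) ^ 3 = 1 :=
  calc (swap a b * swap b c) ^ 3
      = swap a b * (swap b c * swap a b * swap b c) * swap a b * swap b c := by
        simp only [pow_three, mul_assoc]
    _ = swap a b * swap c a * swap a b * swap b c := by rw [swap_mul_swap_mul_swap hab hac]
    _ = swap b c * swap b c := by rw [swap_mul_swap_mul_swap hac.symm hbc.symm]
    _ = 1 := swap_mul_self b c

end ThreeCycle

section Conj

variable {G : Type*} [Group G]

theorem mul_sq_eq_mul_conj (x p : G) : (x * p) ^ 2 = x * MulAut.conj p x * p ^ 2 := by
  simp only [MulAut.conj_apply, sq]; group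

theorem mul_pow_three_eq_mul_conj (x p : G) :
    (x * p) ^ 3 = x * MulAut.conj p x * MulAut.conj (p ^ 2) x * p ^ 3 := by
  simp only [MulAut.conj_apply, sq, pow_three]; group

theorem inv_eq_sq_of_pow_three_eq_one {x : G} (hx : x ^ 3 = 1) : x⁻¹ = x ^ 2 :=
  inv_eq_of_mul_eq_one_left (by rw [← pow_succ, hx])

theorem mul_eq_conj_mul (g x : G) : g * x = MulAut.conj g x * g := by
  rw [MulAut.conj_apply, inv_mul_cancel_right]

end Conj

section Kashaev

open Equiv

variable {ι H : Type*} [Group H] {ζ : H} {A : ι → H} {T : ι → ι → H}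
  {P : Perm ι →* H} {a b c : ι}

theorem A_sq_mul_T_inv_mul_A_mul_P_swap [DecidableEq ι] (hζ : ζ ∈ Subgroup.center H)
    (hA : A a ^ 3 = 1)
    (hTAT : T a b * A a * T b a = ζ * A a * A b * P (swap a b))
    (hPA : ∀ σ j, P σ * A j = A (σ j) * P σ) (hAA : Commute (A a) (A b)) :
    A a ^ 2 * (T a b)⁻¹ * A b * P (swap b c) =
      ζ⁻¹ * (T b a * (A b)⁻¹ * P (swap a b * swap b c)) := by
  have hζ' : ∀ g, Commute ζ⁻¹ g := fun g =>
    Commute.inv_left (Subgroup.mem_center_iff.mp hζ g).symm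
  have hTinv : (A a)⁻¹ * (T a b)⁻¹ = T b a * (P (swap a b))⁻¹ * (A b)⁻¹ * (A a)⁻¹ * ζ⁻¹ :=
    calc (A a)⁻¹ * (T a b)⁻¹ = T b a * (T a b * A a * T b a)⁻¹ := by group
      _ = _ := by rw [hTAT]; group
  calc A a ^ 2 * (T a b)⁻¹ * A b * P (swap b c)
      = T b a * (P (swap a b))⁻¹ * (A b)⁻¹ * (A a)⁻¹ * ζ⁻¹ * A b * P (swap b c) := by
        rw [← inv_eq_sq_of_pow_three_eq_one hA, hTinv]
    _ = ζ⁻¹ * (T b a * (P (swap a b))⁻¹ * ((A b)⁻¹ * (A a)⁻¹ * A b) * P (swap b c)) := by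
        rw [← (hζ' _).eq]; group
    _ = ζ⁻¹ * (T b a * (P (swap a b) * (A a)⁻¹) * P (swap b c)) := by
        rw [← map_inv, swap_inv, mul_assoc (A b)⁻¹, hAA.inv_left.eq, inv_mul_cancel_left,
          mul_assoc (T b a)]
    _ = ζ⁻¹ * (T b a * (A b)⁻¹ * P (swap a b * swap b c)) := by
        rw [SemiconjBy.inv_right (hPA _ a), swap_apply_left, map_mul]; group

theorem conj_P_A (hPA : ∀ σ j, P σ * A j = A (σ j) * P σ) (σ : Perm ι) (j : ι) :
    MulAut.conj (P σ) (A j) = A (σ j) := by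
  rw [MulAut.conj_apply, hPA, mul_inv_cancel_right]

theorem conj_P_T (hPT : ∀ σ j k, j ≠ k → P σ * T j k = T (σ j) (σ k) * P σ) {σ : Perm ι}
    {j k : ι} (hjk : j ≠ k) : MulAut.conj (P σ) (T j k) = T (σ j) (σ k) := by
  rw [MulAut.conj_apply, hPT σ j k hjk, mul_inv_cancel_right]

theorem A_inv_mul_T_mul_A_inv (hAT : A b * T b c * A c = A c * T c b * A b)
    (hAA : Commute (A b) (A c)) : (A b)⁻¹ * T c b * (A c)⁻¹ = (A c)⁻¹ * T b c * (A b)⁻¹ :=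
  calc (A b)⁻¹ * T c b * (A c)⁻¹
      = (A b)⁻¹ * (A c)⁻¹ * (A c * T c b * A b) * ((A b)⁻¹ * (A c)⁻¹) := by group
    _ = (A c)⁻¹ * (A b)⁻¹ * (A b * T b c * A c) * ((A c)⁻¹ * (A b)⁻¹) := by
        rw [← hAT, hAA.inv_inv.eq]
    _ = (A c)⁻¹ * T b c * (A b)⁻¹ := by group

theorem T_mul_A_inv_mul_T_mul_A_inv (hAT : A b * T b c * A c = A c * T c b * A b)
    (hAA : Commute (A b) (A c)) (hTA : Commute (T b a) (A c)) :
    T b a * (A b)⁻¹ * (T c b * (A c)⁻¹) = (A c)⁻¹ * T b a * T b c * (A b)⁻¹ :=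
  calc T b a * (A b)⁻¹ * (T c b * (A c)⁻¹)
      = T b a * ((A b)⁻¹ * T c b * (A c)⁻¹) := by group
    _ = T b a * (A c)⁻¹ * (T b c * (A b)⁻¹) := by rw [A_inv_mul_T_mul_A_inv hAT hAA]; group
    _ = (A c)⁻¹ * T b a * T b c * (A b)⁻¹ := by rw [hTA.inv_right.eq]; group

theorem T_mul_A_inv_mul_T_mul_A_inv_mul_T_mul_A_inv
    (hpent : T a c * T b a = T b a * T b c * T a c) (hAT : A b * T b c * A c = A c * T c b * A b)
    (hAA : Commute (A b) (A c)) (hTA : Commute (T b a) (A c)) (hTA' : Commute (T a c) (A b)) :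
    T b a * (A b)⁻¹ * (T c b * (A c)⁻¹) * (T a c * (A a)⁻¹) =
      (A c)⁻¹ * T a c * T b a * (A b)⁻¹ * (A a)⁻¹ :=
  calc T b a * (A b)⁻¹ * (T c b * (A c)⁻¹) * (T a c * (A a)⁻¹)
      = (A c)⁻¹ * T b a * T b c * ((A b)⁻¹ * T a c) * (A a)⁻¹ := by
        rw [T_mul_A_inv_mul_T_mul_A_inv hAT hAA hTA]; group
    _ = (A c)⁻¹ * (T b a * T b c * T a c) * (A b)⁻¹ * (A a)⁻¹ := by
        rw [← hTA'.inv_right.eq]; group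
    _ = (A c)⁻¹ * T a c * T b a * (A b)⁻¹ * (A a)⁻¹ := by rw [← hpent]; group

theorem T_mul_A_inv_mul_A_inv_mul_T [DecidableEq ι] (hA : A b ^ 3 = 1)
    (hTAT : T b c * A b * T c b = ζ * A b * A c * P (swap b c)) :
    T b c * (A b)⁻¹ * (A b)⁻¹ * T c b = ζ * A b * A c * P (swap b c) := by
  have hAb : (A b)⁻¹ * (A b)⁻¹ = A b := by
    rw [inv_eq_sq_of_pow_three_eq_one hA, ← pow_add, pow_succ, hA, one_mul]
  rw [mul_assoc (T b c), hAb, hTAT]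

theorem P_swap_mul_T_mul_A_inv_mul_A_inv [DecidableEq ι]
    (hPA : ∀ σ j, P σ * A j = A (σ j) * P σ)
    (hPT : ∀ σ j k, j ≠ k → P σ * T j k = T (σ j) (σ k) * P σ)
    (hab : a ≠ b) (hac : a ≠ c) :
    P (swap b c) * (T a c * (A a)⁻¹ * (A c)⁻¹) = T a b * (A a)⁻¹ * (A b)⁻¹ * P (swap b c) := by
  rw [mul_eq_conj_mul]
  simp only [map_mul, map_inv, conj_P_A hPA, conj_P_T hPT hac,
    swap_apply_of_ne_of_ne hab hac, swap_apply_right]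

theorem T_mul_A_mul_T_mul_A_inv_mul_A_inv_mul_P_swap [DecidableEq ι]
    (hTAT : T b a * A b * T a b = ζ * A b * A a * P (swap b a))
    (hPA : ∀ σ j, P σ * A j = A (σ j) * P σ) (hAA : Commute (A a) (A b)) :
    T b a * A b * T a b * (A a)⁻¹ * (A b)⁻¹ * P (swap a b) = ζ := by
  have hP : P (swap a b) * ((A a)⁻¹ * (A b)⁻¹) = (A b)⁻¹ * (A a)⁻¹ * P (swap a b) := by
    rw [mul_eq_conj_mul]
    simp only [map_mul, map_inv, conj_P_A hPA, swap_apply_left, swap_apply_right]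
  calc T b a * A b * T a b * (A a)⁻¹ * (A b)⁻¹ * P (swap a b)
      = ζ * A b * A a * (P (swap a b) * ((A a)⁻¹ * (A b)⁻¹)) * P (swap a b) := by
        rw [hTAT, swap_comm]; group
    _ = ζ * (A b * A a * ((A a)⁻¹ * (A b)⁻¹)) * P (swap a b * swap a b) := by
        rw [hP, hAA.inv_inv.eq, map_mul]; group
    _ = ζ := by rw [swap_mul_self, map_one]; group

theorem A_inv_mul_T_mul_T_mul_A_inv_mul_A_inv_mul_T_mul_T_mul_A_inv_mul_A_inv_mul_P
    [DecidableEq ι] (hζ : ζ ∈ Subgroup.center H) (hA : A b ^ 3 = 1)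
    (hTAT : ∀ j k, j ≠ k → T j k * A j * T k j = ζ * A j * A k * P (swap j k))
    (hPA : ∀ σ j, P σ * A j = A (σ j) * P σ)
    (hPT : ∀ σ j k, j ≠ k → P σ * T j k = T (σ j) (σ k) * P σ)
    (hTA : Commute (T b a) (A c)) (hAA : ∀ j k, j ≠ k → Commute (A j) (A k))
    (hab : a ≠ b) (hac : a ≠ c) (hbc : b ≠ c) :
    (A c)⁻¹ * T b a * T b c * (A b)⁻¹ * ((A b)⁻¹ * T c b * T a c * (A a)⁻¹ * (A c)⁻¹) *
      P (swap b c * swap a b) = ζ ^ 2 := by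
  have hζ' : Commute ζ ((A c)⁻¹ * T b a) := (Subgroup.mem_center_iff.mp hζ _).symm
  have hAc : Commute (A c) (T b a * A b) := hTA.symm.mul_right (hAA b c hbc).symm
  calc (A c)⁻¹ * T b a * T b c * (A b)⁻¹ * ((A b)⁻¹ * T c b * T a c * (A a)⁻¹ * (A c)⁻¹) *
        P (swap b c * swap a b)
      = (A c)⁻¹ * T b a * (T b c * (A b)⁻¹ * (A b)⁻¹ * T c b) * (T a c * (A a)⁻¹ * (A c)⁻¹) *
          P (swap b c) * P (swap a b) := by rw [map_mul]; group
    _ = (A c)⁻¹ * T b a * ζ * A b * A c * (P (swap b c) * (T a c * (A a)⁻¹ * (A c)⁻¹)) *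
          P (swap b c) * P (swap a b) := by
        rw [T_mul_A_inv_mul_A_inv_mul_T hA (hTAT b c hbc)]; group
    _ = ζ * ((A c)⁻¹ * (T b a * A b) * A c * T a b * (A a)⁻¹ * (A b)⁻¹ *
          P (swap b c * swap b c) * P (swap a b)) := by
        rw [P_swap_mul_T_mul_A_inv_mul_A_inv hPA hPT hab hac, ← hζ'.eq, map_mul]; group
    _ = ζ * (T b a * A b * T a b * (A a)⁻¹ * (A b)⁻¹ * P (swap a b)) := by
        rw [swap_mul_self, map_one, hAc.inv_left.eq]; group
    _ = ζ ^ 2 := by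
        rw [T_mul_A_mul_T_mul_A_inv_mul_A_inv_mul_P_swap (hTAT b a hab.symm) hPA (hAA a b hab),
          sq]

theorem T_mul_A_inv_mul_P_pow_five [DecidableEq ι] (hζ : ζ ∈ Subgroup.center H)
    (hA : A b ^ 3 = 1) (hpent : T a c * T b a = T b a * T b c * T a c)
    (hAT : A b * T b c * A c = A c * T c b * A b)
    (hTAT : ∀ j k, j ≠ k → T j k * A j * T k j = ζ * A j * A k * P (swap j k))
    (hPA : ∀ σ j, P σ * A j = A (σ j) * P σ)
    (hPT : ∀ σ j k, j ≠ k → P σ * T j k = T (σ j) (σ k) * P σ)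
    (hTA : ∀ j k l, j ≠ k → j ≠ l → k ≠ l → Commute (T j k) (A l))
    (hAA : ∀ j k, j ≠ k → Commute (A j) (A k))
    (hab : a ≠ b) (hac : a ≠ c) (hbc : b ≠ c) :
    (T b a * (A b)⁻¹ * P (swap a b * swap b c)) ^ 5 = ζ ^ 2 := by
  have hs3 : P (swap a b * swap b c) ^ 3 = 1 := by
    rw [← map_pow, swap_mul_swap_pow_three hab hac hbc, map_one]
  have hs2 : P (swap a b * swap b c) ^ 2 = P (swap b c * swap a b) := by
    rw [← inv_eq_sq_of_pow_three_eq_one hs3, ← map_inv, mul_inv_rev, swap_inv, swap_inv]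
  obtain ⟨hx1, hx2, hy⟩ :
      MulAut.conj (P (swap a b * swap b c)) (T b a * (A b)⁻¹) = T c b * (A c)⁻¹ ∧
      MulAut.conj (P (swap b c * swap a b)) (T b a * (A b)⁻¹) = T a c * (A a)⁻¹ ∧
      MulAut.conj (P (swap b c * swap a b)) ((A c)⁻¹ * T a c * T b a * (A b)⁻¹ * (A a)⁻¹) =
        (A b)⁻¹ * T c b * T a c * (A a)⁻¹ * (A c)⁻¹ := by
    refine ⟨?_, ?_, ?_⟩ <;>
    simp only [map_mul, map_inv, MulAut.mul_apply, conj_P_A hPA, conj_P_T hPT, swap_apply_left,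
      swap_apply_right, swap_apply_of_ne_of_ne, hab, hac, hbc, hab.symm, hac.symm, hbc.symm,
      ne_eq, not_false_eq_true]
  calc (T b a * (A b)⁻¹ * P (swap a b * swap b c)) ^ 5
      = (T b a * (A b)⁻¹ * P (swap a b * swap b c)) ^ 2 *
          (T b a * (A b)⁻¹ * P (swap a b * swap b c)) ^ 3 := by rw [← pow_add]
    _ = (A c)⁻¹ * T b a * T b c * (A b)⁻¹ * P (swap b c * swap a b) *
          ((A c)⁻¹ * T a c * T b a * (A b)⁻¹ * (A a)⁻¹) := by
        rw [mul_sq_eq_mul_conj, mul_pow_three_eq_mul_conj, hs3, mul_one, hs2, hx1, hx2,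
          T_mul_A_inv_mul_T_mul_A_inv_mul_T_mul_A_inv hpent hAT (hAA b c hbc)
            (hTA b a c hab.symm hbc hac) (hTA a c b hac hab hbc.symm),
          T_mul_A_inv_mul_T_mul_A_inv hAT (hAA b c hbc) (hTA b a c hab.symm hbc hac)]
    _ = (A c)⁻¹ * T b a * T b c * (A b)⁻¹ * ((A b)⁻¹ * T c b * T a c * (A a)⁻¹ * (A c)⁻¹) *
          P (swap b c * swap a b) := by
        rw [mul_assoc _ (P _), mul_eq_conj_mul (P _), hy, ← mul_assoc]
    _ = ζ ^ 2 := A_inv_mul_T_mul_T_mul_A_inv_mul_A_inv_mul_T_mul_T_mul_A_inv_mul_A_inv_mul_P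
          hζ hA hTAT hPA hPT (hTA b a c hab.symm hbc hac) hAA hab hac hbc

end Kashaev

theorem betaHat_alphaHat_star_fifth_general
    {H : Type*} [Group H] (ζ : H) (hζ : ζ ∈ Subgroup.center H)
    (A : Qx → H) (T : Qx → Qx → H) (P : Equiv.Perm Qx → H)
    (K1 : ∀ j, A j ^ 3 = 1)
    (K2 : ∀ j k ℓ, j ≠ k → j ≠ ℓ → k ≠ ℓ → T k ℓ * T j k = T j k * T j ℓ * T k ℓ)
    (K3 : ∀ j k, j ≠ k → A j * T j k * A k = A k * T k j * A j)
    (K4 : ∀ j k, j ≠ k → T j k * A j * T k j = ζ * A j * A k * P (Equiv.swap j k))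
    (K5 : ∀ σ τ, P σ * P τ = P (σ * τ))
    (K6a : ∀ (σ : Equiv.Perm Qx) (j), P σ * A j = A (σ j) * P σ)
    (K6b : ∀ (σ : Equiv.Perm Qx) (j k), j ≠ k → P σ * T j k = T (σ j) (σ k) * P σ)
    (K7b : ∀ j k l, j ≠ k → j ≠ l → k ≠ l → T j k * A l = A l * T j k)
    (K7c : ∀ j k, j ≠ k → A j * A k = A k * A j)
    (a b c : Qx) (hab : a ≠ b) (hac : a ≠ c) (hbc : b ≠ c) :
    (A a ^ 2 * (T a b)⁻¹ * A b * P (Equiv.swap b c)) ^ 5 = ζ ^ (-3 : ℤ) := by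
  obtain ⟨P, rfl⟩ : ∃ φ : Equiv.Perm Qx →* H, ⇑φ = P :=
    ⟨MonoidHom.mk' P fun σ τ => (K5 σ τ).symm, rfl⟩
  have hζB : Commute ζ⁻¹ (T b a * (A b)⁻¹ * P (Equiv.swap a b * Equiv.swap b c)) :=
    Commute.inv_left (Subgroup.mem_center_iff.mp hζ _).symm
  rw [A_sq_mul_T_inv_mul_A_mul_P_swap hζ (K1 a) (K4 a b hab) K6a (K7c a b hab),
    hζB.mul_pow, T_mul_A_inv_mul_P_pow_five hζ (K1 b) (K2 b a c hab.symm hbc hac) (K3 b c hbc)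
      K4 K6a K6b K7b K7c hab hac hbc]
  group

/-- for any mutually distinct `a, b, c ∈ I`,
`(A(a)²·T(a,b)⁻¹·A(b)·P(swap(b,c)))⁵ = ζ⁻³`. -/
theorem betaHat_alphaHat_star_fifth
    {H : Type*} [Group H] (ζ : H) (hζ : ζ ∈ Subgroup.center H)
    (A : Qx → H) (T : Qx → Qx → H) (P : Equiv.Perm Qx → H)
    (K1 : ∀ j, A j ^ 3 = 1)
    (K2 : ∀ j k ℓ, j ≠ k → j ≠ ℓ → k ≠ ℓ → T k ℓ * T j k = T j k * T j ℓ * T k ℓ)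
    (K3 : ∀ j k, j ≠ k → A j * T j k * A k = A k * T k j * A j)
    (K4 : ∀ j k, j ≠ k → T j k * A j * T k j = ζ * A j * A k * P (Equiv.swap j k))
    (K5 : ∀ σ τ, P σ * P τ = P (σ * τ))
    (K6a : ∀ (σ : Equiv.Perm Qx) (j), P σ * A j = A (σ j) * P σ)
    (K6b : ∀ (σ : Equiv.Perm Qx) (j k), j ≠ k → P σ * T j k = T (σ j) (σ k) * P σ)
    (K7a : ∀ j k l m, j ≠ k → j ≠ l → j ≠ m → k ≠ l → k ≠ m → l ≠ m →
      T j k * T l m = T l m * T j k)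
    (K7b : ∀ j k l, j ≠ k → j ≠ l → k ≠ l → T j k * A l = A l * T j k)
    (K7c : ∀ j k, j ≠ k → A j * A k = A k * A j)
    (a b c : Qx) (hab : a ≠ b) (hac : a ≠ c) (hbc : b ≠ c) :
    (A a ^ 2 * (T a b)⁻¹ * A b * P (Equiv.swap b c)) ^ 5 = ζ ^ (-3 : ℤ) :=
  betaHat_alphaHat_star_fifth_general ζ hζ A T P K1 K2 K3 K4 K5 K6a K6b K7b K7c a b c hab hac hbc
end

section
/- For any mutually distinct a, b, c ∈ I, one has (A(a)² · T(a,b)⁻¹ · A(b) · P(swap(b,c)))² = A(a) · A(b) · T(b,a)⁻¹ · T(a,c)⁻¹ · A(c) in H. -/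
/-!
Write `p = P(swap b c)`. By (K5) `p` is an involution, and by (K6) conjugation by `p` fixes `A(a)`
and sends `A(b)`, `T(a,b)` to `A(c)`, `T(a,c)`. Hence the square of `u * p`, with
`u = A(a)² T(a,b)⁻¹ A(b)`, is `u` times the swapped word `A(a)² T(a,c)⁻¹ A(c)`. What remains is
`A(a)² T(a,b)⁻¹ A(b) A(a)² = A(a) A(b) T(b,a)⁻¹`, which is (K3) solved for `T(b,a)` once `A(a)`
and `A(b)` commute (K7) and `A(a)⁻¹ = A(a)²` (K1).
-/

theorem mul_sq_eq_of_semiconjBy {M : Type*} [Monoid M] {p u v : M}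
    (h : SemiconjBy p u v) (hp : p * p = 1) : (u * p) ^ 2 = u * v := by
  rw [sq, mul_assoc, ← mul_assoc p, h.eq, mul_assoc v, hp, mul_one]

theorem sq_mul_inv_mul_mul_sq {G : Type*} [Group G] {x y t t' : G} (hx : x ^ 3 = 1)
    (hxy : Commute x y) (h : x * t * y = y * t' * x) :
    x ^ 2 * t⁻¹ * y * x ^ 2 = x * y * t'⁻¹ := by
  have hx2 : x ^ 2 = x⁻¹ := eq_inv_of_mul_eq_one_left (by rw [← pow_succ, hx])
  obtain rfl : t' = y⁻¹ * (x * t * y) * x⁻¹ := by rw [h]; group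
  rw [show x * y * (y⁻¹ * (x * t * y) * x⁻¹)⁻¹ = x * (y * x) * y⁻¹ * t⁻¹ * (x⁻¹ * y) by group,
    ← hxy.eq, hxy.inv_left.eq, ← hx2, sq]
  group

theorem betaHat_alphaHat_star_squared_general
    {H : Type*} [Group H]
    (A : Qx → H) (T : Qx → Qx → H) (P : Equiv.Perm Qx → H)
    (K1 : ∀ j, A j ^ 3 = 1)
    (K3 : ∀ j k, j ≠ k → A j * T j k * A k = A k * T k j * A j)
    (K5 : ∀ σ τ, P σ * P τ = P (σ * τ))
    (K6a : ∀ (σ : Equiv.Perm Qx) (j), P σ * A j = A (σ j) * P σ)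
    (K6b : ∀ (σ : Equiv.Perm Qx) (j k), j ≠ k → P σ * T j k = T (σ j) (σ k) * P σ)
    (K7c : ∀ j k, j ≠ k → A j * A k = A k * A j)
    (a b c : Qx) (hab : a ≠ b) (hac : a ≠ c) :
    (A a ^ 2 * (T a b)⁻¹ * A b * P (Equiv.swap b c)) ^ 2
      = A a * A b * (T b a)⁻¹ * (T a c)⁻¹ * A c := by
  set p := P (Equiv.swap b c)
  have hσa : Equiv.swap b c a = a := Equiv.swap_apply_of_ne_of_ne hab hac
  have hσb : Equiv.swap b c b = c := Equiv.swap_apply_left b c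
  have hP1 : P 1 = 1 := (MonoidHom.mk' P fun σ τ ↦ (K5 σ τ).symm).map_one
  have hp : p * p = 1 := by rw [K5, Equiv.swap_mul_self, hP1]
  have hpa : SemiconjBy p (A a) (A a) := by
    simpa only [SemiconjBy, hσa] using K6a (Equiv.swap b c) a
  have hpb : SemiconjBy p (A b) (A c) := by
    simpa only [SemiconjBy, hσb] using K6a (Equiv.swap b c) b
  have hpT : SemiconjBy p (T a b) (T a c) := by
    simpa only [SemiconjBy, hσa, hσb] using K6b (Equiv.swap b c) a b hab
  rw [mul_sq_eq_of_semiconjBy ((hpa.pow_right 2 |>.mul_right hpT.inv_right).mul_right hpb) hp,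
    ← sq_mul_inv_mul_mul_sq (K1 a) (K7c a b hab) (K3 a b hab)]
  simp only [mul_assoc]

/-- for any mutually distinct `a, b, c ∈ I`,
`(A(a)²·T(a,b)⁻¹·A(b)·P(swap(b,c)))² = A(a)·A(b)·T(b,a)⁻¹·T(a,c)⁻¹·A(c)`. -/
theorem betaHat_alphaHat_star_squared
    {H : Type*} [Group H] (ζ : H) (hζ : ζ ∈ Subgroup.center H)
    (A : Qx → H) (T : Qx → Qx → H) (P : Equiv.Perm Qx → H)
    (K1 : ∀ j, A j ^ 3 = 1)
    (K2 : ∀ j k ℓ, j ≠ k → j ≠ ℓ → k ≠ ℓ → T k ℓ * T j k = T j k * T j ℓ * T k ℓ)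
    (K3 : ∀ j k, j ≠ k → A j * T j k * A k = A k * T k j * A j)
    (K4 : ∀ j k, j ≠ k → T j k * A j * T k j = ζ * A j * A k * P (Equiv.swap j k))
    (K5 : ∀ σ τ, P σ * P τ = P (σ * τ))
    (K6a : ∀ (σ : Equiv.Perm Qx) (j), P σ * A j = A (σ j) * P σ)
    (K6b : ∀ (σ : Equiv.Perm Qx) (j k), j ≠ k → P σ * T j k = T (σ j) (σ k) * P σ)
    (K7a : ∀ j k l m, j ≠ k → j ≠ l → j ≠ m → k ≠ l → k ≠ m → l ≠ m →
      T j k * T l m = T l m * T j k)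
    (K7b : ∀ j k l, j ≠ k → j ≠ l → k ≠ l → T j k * A l = A l * T j k)
    (K7c : ∀ j k, j ≠ k → A j * A k = A k * A j)
    (a b c : Qx) (hab : a ≠ b) (hac : a ≠ c) (hbc : b ≠ c) :
    (A a ^ 2 * (T a b)⁻¹ * A b * P (Equiv.swap b c)) ^ 2
      = A a * A b * (T b a)⁻¹ * (T a c)⁻¹ * A c :=
  betaHat_alphaHat_star_squared_general A T P K1 K3 K5 K6a K6b K7c a b c hab hac
end

section
/- For any distinct j, k ∈ I, one has T(j,k)⁻¹ · A(j) · A(k) = ζ⁻¹ · A(j) · P(swap(j,k)) · T(j,k) and T(j,k)⁻¹ · A(j)² · A(k) = A(j)² · A(k) · T(k,j)⁻¹ in H. -/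
section
variable {H : Type*} [Group H]

theorem mul_self_eq_one_of_map_mul {M : Type*} [Monoid M] {P : M → H}
    (hP : ∀ σ τ, P σ * P τ = P (σ * τ)) {σ : M} (hσ : σ * σ = 1) : P σ * P σ = 1 := by
  rw [hP, hσ]
  exact (MonoidHom.mk' P fun a b => (hP a b).symm).map_one

theorem inv_mul_mul_eq_of_mul_mul_eq {ζ a b t t' p : H} (hζ : ζ ∈ Subgroup.center H)
    (hp : p * p = 1) (hpt : p * t = t' * p) (h : t * a * t' = ζ * a * b * p) :
    t⁻¹ * a * b = ζ⁻¹ * a * p * t := by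
  have hab : a * b = ζ⁻¹ * (t * a * t') * p := by
    rw [h]; simp only [mul_assoc, hp, inv_mul_cancel_left, mul_one]
  calc t⁻¹ * a * b = t⁻¹ * ζ⁻¹ * (t * a * t') * p := by rw [mul_assoc t⁻¹, hab]; group
    _ = ζ⁻¹ * a * (t' * p) := by rw [Subgroup.mem_center_iff.mp (inv_mem hζ)]; group
    _ = ζ⁻¹ * a * p * t := by rw [← hpt]; group

theorem inv_mul_sq_mul_eq_of_mul_mul_eq {a b t t' : H} (ha : a ^ 3 = 1) (hab : Commute a b)
    (h : a * t * b = b * t' * a) : t⁻¹ * a ^ 2 * b = a ^ 2 * b * t'⁻¹ := by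
  have key : a⁻¹ * b * t' = t * (a⁻¹ * b) :=
    calc a⁻¹ * b * t' = a⁻¹ * (b * t' * a) * a⁻¹ := by group
      _ = t * (b * a⁻¹) := by rw [← h]; group
      _ = t * (a⁻¹ * b) := by rw [hab.inv_left.eq]
  rw [eq_inv_of_mul_eq_one_left (by rw [← pow_succ, ha] : a ^ 2 * a = 1),
    eq_mul_inv_iff_mul_eq, mul_assoc t⁻¹, mul_assoc t⁻¹, key, inv_mul_cancel_left]

end

theorem lifted_Kashaev_variants_one_general
    {H : Type*} [Group H] (ζ : H) (hζ : ζ ∈ Subgroup.center H)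
    (A : Qx → H) (T : Qx → Qx → H) (P : Equiv.Perm Qx → H)
    (K1 : ∀ j, A j ^ 3 = 1)
    (K3 : ∀ j k, j ≠ k → A j * T j k * A k = A k * T k j * A j)
    (K4 : ∀ j k, j ≠ k → T j k * A j * T k j = ζ * A j * A k * P (Equiv.swap j k))
    (K5 : ∀ σ τ, P σ * P τ = P (σ * τ))
    (K6b : ∀ (σ : Equiv.Perm Qx) (j k), j ≠ k → P σ * T j k = T (σ j) (σ k) * P σ)
    (K7c : ∀ j k, j ≠ k → A j * A k = A k * A j)
    (j k : Qx) (hjk : j ≠ k) :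
    (T j k)⁻¹ * A j * A k = ζ⁻¹ * A j * P (Equiv.swap j k) * T j k ∧
    (T j k)⁻¹ * A j ^ 2 * A k = A j ^ 2 * A k * (T k j)⁻¹ := by
  have hP : P (Equiv.swap j k) * P (Equiv.swap j k) = 1 :=
    mul_self_eq_one_of_map_mul K5 (Equiv.swap_mul_self j k)
  have hPT : P (Equiv.swap j k) * T j k = T k j * P (Equiv.swap j k) := by
    simpa using K6b (Equiv.swap j k) j k hjk
  exact ⟨inv_mul_mul_eq_of_mul_mul_eq hζ hP hPT (K4 j k hjk),
    inv_mul_sq_mul_eq_of_mul_mul_eq (K1 j) (K7c j k hjk) (K3 j k hjk)⟩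

/-- for any distinct `j, k ∈ I`, one has
`T(j,k)⁻¹·A(j)·A(k) = ζ⁻¹·A(j)·P(swap(j,k))·T(j,k)` and
`T(j,k)⁻¹·A(j)²·A(k) = A(j)²·A(k)·T(k,j)⁻¹`. -/
theorem lifted_Kashaev_variants_one
    {H : Type*} [Group H] (ζ : H) (hζ : ζ ∈ Subgroup.center H)
    (A : Qx → H) (T : Qx → Qx → H) (P : Equiv.Perm Qx → H)
    (K1 : ∀ j, A j ^ 3 = 1)
    (K2 : ∀ j k ℓ, j ≠ k → j ≠ ℓ → k ≠ ℓ → T k ℓ * T j k = T j k * T j ℓ * T k ℓ)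
    (K3 : ∀ j k, j ≠ k → A j * T j k * A k = A k * T k j * A j)
    (K4 : ∀ j k, j ≠ k → T j k * A j * T k j = ζ * A j * A k * P (Equiv.swap j k))
    (K5 : ∀ σ τ, P σ * P τ = P (σ * τ))
    (K6a : ∀ (σ : Equiv.Perm Qx) (j), P σ * A j = A (σ j) * P σ)
    (K6b : ∀ (σ : Equiv.Perm Qx) (j k), j ≠ k → P σ * T j k = T (σ j) (σ k) * P σ)
    (K7a : ∀ j k l m, j ≠ k → j ≠ l → j ≠ m → k ≠ l → k ≠ m → l ≠ m →
      T j k * T l m = T l m * T j k)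
    (K7b : ∀ j k l, j ≠ k → j ≠ l → k ≠ l → T j k * A l = A l * T j k)
    (K7c : ∀ j k, j ≠ k → A j * A k = A k * A j)
    (j k : Qx) (hjk : j ≠ k) :
    (T j k)⁻¹ * A j * A k = ζ⁻¹ * A j * P (Equiv.swap j k) * T j k ∧
    (T j k)⁻¹ * A j ^ 2 * A k = A j ^ 2 * A k * (T k j)⁻¹ :=
  lifted_Kashaev_variants_one_general ζ hζ A T P K1 K3 K4 K5 K6b K7c j k hjk
end

section
/- Let G be a group, N a normal subgroup of G, S a subset of G generating G, and P a subset of N generating N. Suppose that all elements of P have the same image in the abelianization N/⁅N,N⁆, and that for every s ∈ S and every p ∈ P there exists p' ∈ P with s·p·s⁻¹·p'⁻¹ ∈ ⁅N,N⁆. Then the image of N in the quotient G/⁅N,N⁆ is contained in the center of G/⁅N,N⁆; in particular, G/⁅N,N⁆ is a central extension of G/N by N/⁅N,N⁆. -/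
/-!
Modulo `⁅N, N⁆`, all generators in `P` have one and the same image `z`, and each generator
`s ∈ S` conjugates `z` to the image of some element of `P`, i.e. to `z` again. Hence `z`
commutes with a generating set of `G ⧸ ⁅N, N⁆` and is central; the image of `N` is generated
by `z`. The remaining assertions are the isomorphism theorems for `⁅N, N⁆ ≤ N`.
-/

open Subgroup QuotientGroup

theorem Subgroup.mem_center_of_forall_commute {G : Type*} [Group G] {S : Set G}
    (hS : closure S = ⊤) {x : G} (hx : ∀ s ∈ S, Commute s x) : x ∈ center G := by
  rw [← centralizer_univ, ← coe_top, ← hS, centralizer_closure]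
  exact mem_centralizer_iff.2 hx

noncomputable def Subgroup.mapEquivQuotientKerSubgroupOf {G Q : Type*} [Group G] [Group Q]
    (f : G →* Q) (H : Subgroup G) : H.map f ≃* H ⧸ f.ker.subgroupOf H :=
  (MulEquiv.subgroupCongr (f.domRestrict_range H).symm).trans
    (quotientKerEquivRange (f.domRestrict H)).symm

theorem QuotientGroup.map_closure_le_center {G : Type*} [Group G] (K : Subgroup G) [K.Normal]
    {S : Set G} (hS : closure S = ⊤) {P : Set G}
    (hsame : ∀ p ∈ P, ∀ p' ∈ P, p * p'⁻¹ ∈ K)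
    (hconj : ∀ s ∈ S, ∀ p ∈ P, ∃ p' ∈ P, s * p * s⁻¹ * p'⁻¹ ∈ K) :
    (closure P).map (mk' K) ≤ center (G ⧸ K) := by
  have hS' : closure (mk' K '' S) = ⊤ := by
    rw [← MonoidHom.map_closure, hS, map_top_of_surjective _ (mk'_surjective K)]
  rw [MonoidHom.map_closure, closure_le]
  rintro _ ⟨p, hp, rfl⟩
  refine mem_center_of_forall_commute hS' ?_
  rintro _ ⟨s, hs, rfl⟩
  obtain ⟨p', hp', hsp⟩ := hconj s hs p hp
  have hconj_eq : ((s * p * s⁻¹ : G) : G ⧸ K) = p' := by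
    rw [eq_iff_div_mem, div_eq_mul_inv]; exact hsp
  have hsame_eq : (p' : G ⧸ K) = p := by
    rw [eq_iff_div_mem, div_eq_mul_inv]; exact hsame p' hp' p hp
  have hfix : (s : G ⧸ K) * p * (s : G ⧸ K)⁻¹ = p := by
    rw [← mk_inv, ← mk_mul, ← mk_mul, hconj_eq, hsame_eq]
  exact mul_inv_eq_iff_eq_mul.1 hfix

theorem relativeAbelianization_is_central_extension_general
    {G : Type*} [Group G] (N : Subgroup G) [N.Normal]
    (S : Set G) (hS : Subgroup.closure S = ⊤)
    (P : Set G) (hPgen : Subgroup.closure P = N)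
    (hsame : ∀ p ∈ P, ∀ p' ∈ P, p * p'⁻¹ ∈ (⁅N, N⁆ : Subgroup G))
    (hconj : ∀ s ∈ S, ∀ p ∈ P, ∃ p' ∈ P, s * p * s⁻¹ * p'⁻¹ ∈ (⁅N, N⁆ : Subgroup G)) :
    N.map (QuotientGroup.mk' (⁅N, N⁆ : Subgroup G))
        ≤ Subgroup.center (G ⧸ (⁅N, N⁆ : Subgroup G)) ∧
    (∃ q : G ⧸ (⁅N, N⁆ : Subgroup G) →* G ⧸ N,
      (∀ g : G, q (QuotientGroup.mk g) = QuotientGroup.mk g) ∧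
      Function.Surjective q ∧
      q.ker = N.map (QuotientGroup.mk' (⁅N, N⁆ : Subgroup G))) ∧
    Nonempty ((N.map (QuotientGroup.mk' (⁅N, N⁆ : Subgroup G))) ≃*
      (↥N ⧸ ((⁅N, N⁆ : Subgroup G).subgroupOf N))) := by
  have hKN : ⁅N, N⁆ ≤ N := commutator_le_left N N
  refine ⟨hPgen ▸ map_closure_le_center ⁅N, N⁆ hS hsame hconj,
    ⟨QuotientGroup.map _ _ (.id G) hKN, fun _ => rfl, ?_, ?_⟩, ⟨?_⟩⟩
  · exact map_surjective_of_surjective _ _ _ mk_surjective _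
  · exact (ker_map ..).trans (congrArg _ (comap_id N))
  · exact (N.mapEquivQuotientKerSubgroupOf (mk' _)).trans
      (quotientMulEquivOfEq (by rw [ker_mk']))

/-- Let `G` be a group, `N` a normal subgroup, `S` a generating subset of
`G`, and `P ⊆ N` a generating subset of `N`.  Suppose all elements of `P` have the same
image in the abelianization `N ⧸ ⁅N,N⁆` (i.e. `p·p'⁻¹ ∈ ⁅N,N⁆` for all `p, p' ∈ P`), and
for every `s ∈ S` and `p ∈ P` there is `p' ∈ P` with `s·p·s⁻¹·p'⁻¹ ∈ ⁅N,N⁆`.  Then the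
image of `N` in `G ⧸ ⁅N,N⁆` is contained in the center of `G ⧸ ⁅N,N⁆`; in particular
`G ⧸ ⁅N,N⁆` is a central extension of `G ⧸ N` by `N ⧸ ⁅N,N⁆`: the natural projection
`G ⧸ ⁅N,N⁆ →* G ⧸ N` is surjective with kernel the (central) image of `N`, and this
kernel is isomorphic to the abelianization `N ⧸ ⁅N,N⁆`. -/
theorem relativeAbelianization_is_central_extension
    {G : Type*} [Group G] (N : Subgroup G) [N.Normal]
    (S : Set G) (hS : Subgroup.closure S = ⊤)
    (P : Set G) (hPN : P ⊆ (N : Set G)) (hPgen : Subgroup.closure P = N)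
    (hsame : ∀ p ∈ P, ∀ p' ∈ P, p * p'⁻¹ ∈ (⁅N, N⁆ : Subgroup G))
    (hconj : ∀ s ∈ S, ∀ p ∈ P, ∃ p' ∈ P, s * p * s⁻¹ * p'⁻¹ ∈ (⁅N, N⁆ : Subgroup G)) :
    N.map (QuotientGroup.mk' (⁅N, N⁆ : Subgroup G))
        ≤ Subgroup.center (G ⧸ (⁅N, N⁆ : Subgroup G)) ∧
    (∃ q : G ⧸ (⁅N, N⁆ : Subgroup G) →* G ⧸ N,
      (∀ g : G, q (QuotientGroup.mk g) = QuotientGroup.mk g) ∧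
      Function.Surjective q ∧
      q.ker = N.map (QuotientGroup.mk' (⁅N, N⁆ : Subgroup G))) ∧
    Nonempty ((N.map (QuotientGroup.mk' (⁅N, N⁆ : Subgroup G))) ≃*
      (↥N ⧸ ((⁅N, N⁆ : Subgroup G).subgroupOf N))) :=
  relativeAbelianization_is_central_extension_general N S hS P hPgen hsame hconj
end
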